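/- Let (q_n)_{n∈ℕ} be a sequence of polynomials in K[x] with deg q_n = n and q_n(0) = δ_{n0}, let Q be the K-linear operator with Q q_0 = 0 and Q q_n = q_{n−1} (n ≥ 1), and let G^{(y)} : K[x] → K[x,y] be defined by G^{(y)} p = Σ_{k=0}^{deg p} q_k(y) · (Q^k p). Then for every p ∈ K[x], the bivariate polynomial u := G^{(y)} p ∈ K[x,y] satisfies Q_x u = Q_y u and u(x, 0) = p(x), where Q_x is the K[y]-linear extension of Q acting on the variable x of K[x,y] and Q_y is the K[x]-linear extension of Q acting on the variable y. -/

import Mathlib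

open Polynomial

noncomputable section

/-- The generalized translation operator `G^{(y)} : K[x] → K[x,y]`,
`G^{(y)} p = ∑_{k=0}^{deg p} q_k(y) · (Q^k p)`.  Here `K[x,y]` is represented as
`(K[x])[y]` (inner variable `x`, outer variable `y`). -/
def genTranslation {K : Type*} [CommRing K] (q : ℕ → Polynomial K)
    (Q : Polynomial K →ₗ[K] Polynomial K) (p : Polynomial K) :
    Polynomial (Polynomial K) :=
  ∑ k ∈ Finset.range (p.natDegree + 1), (q k).map C * C ((Q ^ k) p)

/-- The `K[y]`-linear extension of an operator `θ` on `K[x]` to `K[x,y] = (K[x])[y]`: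
it applies `θ` to each `K[x]`-coefficient, i.e. it acts on the variable `x`. -/
def extendX {K : Type*} [CommRing K] (θ : Polynomial K → Polynomial K)
    (u : Polynomial (Polynomial K)) : Polynomial (Polynomial K) :=
  u.sum fun n a => C (θ a) * X ^ n

/-- The `K[x]`-linear extension of an operator `θ` to `K[x,y] = (K[x])[y]` acting on the
variable `y`. -/
def applyY {K : Type*} [CommRing K] (θ : Polynomial K → Polynomial K)
    (u : Polynomial (Polynomial K)) : Polynomial (Polynomial K) :=
  u.sum fun n a => C a * (θ (X ^ n)).map C

section Aux

variable {K : Type*} [CommRing K]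

lemma extendX_zero (θ : Polynomial K → Polynomial K) : extendX θ 0 = 0 := by
  simp [extendX]

lemma extendX_add (θ : Polynomial K →ₗ[K] Polynomial K) (u v : Polynomial (Polynomial K)) :
    extendX ⇑θ (u + v) = extendX ⇑θ u + extendX ⇑θ v := by
  unfold extendX
  rw [Polynomial.sum_add_index] <;> intros <;> simp [add_mul]

lemma applyY_zero (θ : Polynomial K →ₗ[K] Polynomial K) : applyY ⇑θ 0 = 0 := by
  simp [applyY]

lemma applyY_add (θ : Polynomial K →ₗ[K] Polynomial K) (u v : Polynomial (Polynomial K)) :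
    applyY ⇑θ (u + v) = applyY ⇑θ u + applyY ⇑θ v := by
  unfold applyY
  rw [Polynomial.sum_add_index] <;> intros <;> simp [add_mul]

lemma extendX_finset_sum (θ : Polynomial K →ₗ[K] Polynomial K) {ι : Type*} (s : Finset ι)
    (f : ι → Polynomial (Polynomial K)) :
    extendX ⇑θ (∑ i ∈ s, f i) = ∑ i ∈ s, extendX ⇑θ (f i) := by
  classical
  induction s using Finset.induction_on with
  | empty => simp [extendX_zero]
  | insert _ _ h ih => rw [Finset.sum_insert h, Finset.sum_insert h, extendX_add, ih]

lemma applyY_finset_sum (θ : Polynomial K →ₗ[K] Polynomial K) {ι : Type*} (s : Finset ι)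
    (f : ι → Polynomial (Polynomial K)) :
    applyY ⇑θ (∑ i ∈ s, f i) = ∑ i ∈ s, applyY ⇑θ (f i) := by
  classical
  induction s using Finset.induction_on with
  | empty => simp [applyY, Polynomial.sum_zero_index]
  | insert _ _ h ih => rw [Finset.sum_insert h, Finset.sum_insert h, applyY_add, ih]

lemma extendX_mul (θ : Polynomial K →ₗ[K] Polynomial K) (f r : Polynomial K) :
    extendX ⇑θ (f.map C * C r) = f.map C * C (θ r) := by
  induction f using Polynomial.induction_on' with
  | add p q hp hq =>
    rw [Polynomial.map_add, add_mul, extendX_add, hp, hq, add_mul]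
  | monomial m c =>
    have h1 : (Polynomial.monomial m c).map C * C r
        = Polynomial.monomial m (C c * r) := by
      rw [Polynomial.map_monomial]
      rw [mul_comm, Polynomial.C_mul_monomial, mul_comm]
    have h2 : (Polynomial.monomial m c).map C * C (θ r)
        = Polynomial.monomial m (C c * θ r) := by
      rw [Polynomial.map_monomial]
      rw [mul_comm, Polynomial.C_mul_monomial, mul_comm]
    rw [h1, h2]
    unfold extendX
    rw [Polynomial.sum_monomial_index _ _ (by simp)]
    have h3 : θ (C c * r) = C c * θ r := by
      rw [← Polynomial.smul_eq_C_mul, map_smul, Polynomial.smul_eq_C_mul]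
    rw [h3, Polynomial.C_mul_X_pow_eq_monomial]

lemma applyY_mul (θ : Polynomial K →ₗ[K] Polynomial K) (f r : Polynomial K) :
    applyY ⇑θ (f.map C * C r) = C r * (θ f).map C := by
  induction f using Polynomial.induction_on' with
  | add p q hp hq =>
    rw [Polynomial.map_add, add_mul, applyY_add, hp, hq, map_add, Polynomial.map_add, mul_add]
  | monomial m c =>
    have h1 : (Polynomial.monomial m c).map C * C r
        = Polynomial.monomial m (C c * r) := by
      rw [Polynomial.map_monomial]
      rw [mul_comm, Polynomial.C_mul_monomial, mul_comm]
    rw [h1]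
    unfold applyY
    rw [Polynomial.sum_monomial_index _ _ (by simp)]
    have h3 : θ (Polynomial.monomial m c) = C c * θ (X ^ m) := by
      rw [← Polynomial.C_mul_X_pow_eq_monomial, ← Polynomial.smul_eq_C_mul, map_smul,
        Polynomial.smul_eq_C_mul]
    rw [h3, Polynomial.map_mul, Polynomial.map_C, map_mul]
    ring

end Aux

/-- If `deg q_n = n`, `Q q_0 = 0`, `Q q_{n+1} = q_n`, then `Q^n` kills polynomials of
degree `< n`. -/
lemma Qpow_eq_zero {K : Type*} [Field K]
    (q : ℕ → Polynomial K) (hqdeg : ∀ n, (q n).degree = n)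
    (Q : Polynomial K →ₗ[K] Polynomial K)
    (hQ0 : Q (q 0) = 0) (hQ : ∀ n, Q (q (n + 1)) = q n) :
    ∀ n : ℕ, ∀ p : Polynomial K, p.degree < n → (Q ^ n) p = 0 := by
  intro n
  induction n with
  | zero =>
    intro p hp
    have hp0 : p = 0 := by
      by_contra h
      exact absurd (Polynomial.zero_le_degree_iff.mpr h) (not_le.mpr (by exact_mod_cast hp))
    simp [hp0]
  | succ n ih =>
    intro p hp
    have hqne : q n ≠ 0 := by
      intro h
      have := hqdeg n
      rw [h, Polynomial.degree_zero] at this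
      exact (by simp : (⊥ : WithBot ℕ) ≠ (n : WithBot ℕ)) this
    have hnd : (q n).natDegree = n := Polynomial.natDegree_eq_of_degree_eq_some (hqdeg n)
    have hqn0 : (q n).coeff n ≠ 0 := by
      have h := Polynomial.leadingCoeff_ne_zero.mpr hqne
      rwa [Polynomial.leadingCoeff, hnd] at h
    set c := p.coeff n / (q n).coeff n with hc
    set r := p - C c * q n with hr
    have hrdeg : r.degree < (n : WithBot ℕ) := by
      rw [Polynomial.degree_lt_iff_coeff_zero]
      intro m hm
      rcases eq_or_lt_of_le hm with h | h
      · have hmn : m = n := by exact_mod_cast h.symm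
        subst hmn
        rw [hr]
        simp only [Polynomial.coeff_sub, Polynomial.coeff_C_mul]
        rw [hc, div_mul_cancel₀ _ hqn0, sub_self]
      · have hmn : n < m := by exact_mod_cast h
        have h1 : p.coeff m = 0 := by
          apply Polynomial.coeff_eq_zero_of_degree_lt
          exact lt_of_lt_of_le hp (by exact_mod_cast hmn)
        have h2 : (q n).coeff m = 0 := by
          apply Polynomial.coeff_eq_zero_of_degree_lt
          rw [hqdeg n]; exact_mod_cast hmn
        rw [hr]
        simp [h1, h2]
    have hQqn : (Q (q n)).degree < (n : WithBot ℕ) := by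
      cases n with
      | zero => rw [hQ0, Polynomial.degree_zero]; exact WithBot.bot_lt_coe _
      | succ m => rw [hQ m, hqdeg m]; exact_mod_cast Nat.lt_succ_self m
    have hpr : p = C c * q n + r := by rw [hr]; ring
    have key : (Q ^ (n + 1)) p = (Q ^ n) (Q p) := by
      rw [pow_succ, Module.End.mul_apply]
    rw [key, hpr, map_add, map_add]
    have h1 : Q (C c * q n) = c • Q (q n) := by
      rw [← Polynomial.smul_eq_C_mul, map_smul]
    rw [h1, map_smul, ih _ hQqn, smul_zero, zero_add]
    have h2 : (Q ^ n) (Q r) = Q ((Q ^ n) r) := by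
      rw [← Module.End.mul_apply, ← Module.End.mul_apply, ← pow_succ, ← pow_succ']
    rw [h2, ih _ hrdeg, map_zero]

/-- **Cauchy problem.** For every `p ∈ K[x]`, the bivariate polynomial
`u := G^{(y)} p` satisfies `Q_x u = Q_y u` and `u(x, 0) = p(x)`. -/
theorem genTranslation_cauchy_problem {K : Type*} [Field K] [CharZero K]
    (q : ℕ → Polynomial K) (hqdeg : ∀ n, (q n).degree = n)
    (hq0 : ∀ n, (q n).eval 0 = if n = 0 then 1 else 0)
    (Q : Polynomial K →ₗ[K] Polynomial K)
    (hQ0 : Q (q 0) = 0) (hQ : ∀ n, Q (q (n + 1)) = q n) :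
    ∀ p : Polynomial K,
      extendX (⇑Q) (genTranslation q Q p) = applyY (⇑Q) (genTranslation q Q p) ∧
      Polynomial.eval 0 (genTranslation q Q p) = p := by
  intro p
  set N := p.natDegree with hN
  constructor
  · have hext : extendX ⇑Q (genTranslation q Q p)
        = ∑ k ∈ Finset.range (N + 1), (q k).map C * C (Q ((Q ^ k) p)) := by
      unfold genTranslation
      rw [extendX_finset_sum]
      exact Finset.sum_congr rfl fun k _ => extendX_mul Q (q k) ((Q ^ k) p)
    have happ : applyY ⇑Q (genTranslation q Q p)
        = ∑ k ∈ Finset.range (N + 1), C ((Q ^ k) p) * (Q (q k)).map C := by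
      unfold genTranslation
      rw [applyY_finset_sum]
      exact Finset.sum_congr rfl fun k _ => applyY_mul Q (q k) ((Q ^ k) p)
    rw [hext, happ, Finset.sum_range_succ, Finset.sum_range_succ']
    have hlast : Q ((Q ^ N) p) = 0 := by
      have hdp : p.degree < ((N + 1 : ℕ) : WithBot ℕ) :=
        lt_of_le_of_lt Polynomial.degree_le_natDegree (by exact_mod_cast Nat.lt_succ_self N)
      have := Qpow_eq_zero q hqdeg Q hQ0 hQ (N + 1) p hdp
      rwa [pow_succ', Module.End.mul_apply] at this
    rw [hlast, hQ0]
    simp only [map_zero, mul_zero, add_zero, Polynomial.map_zero, mul_zero, add_zero]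
    apply Finset.sum_congr rfl
    intro i _
    rw [hQ i, pow_succ', Module.End.mul_apply, mul_comm]
  · unfold genTranslation
    rw [Polynomial.eval_finset_sum]
    rw [Finset.sum_eq_single 0]
    · rw [pow_zero, Module.End.one_apply, Polynomial.eval_mul, Polynomial.eval_C,
        Polynomial.eval_map, Polynomial.eval₂_at_zero, Polynomial.coeff_zero_eq_eval_zero,
        hq0 0]
      simp
    · intro k _ hk
      rw [Polynomial.eval_mul, Polynomial.eval_map, Polynomial.eval₂_at_zero,
        Polynomial.coeff_zero_eq_eval_zero, hq0 k, if_neg hk]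
      simp
    · intro h
      exact absurd (Finset.mem_range.mpr (Nat.succ_pos N)) h

end
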